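/- arXiv:1706.09682 — 2 statements merged into one kernel-verified Lean document; each statement's English description precedes it below -/
import Mathlib

section
/- Let P be the orthogonal projection of ℓ²(K_q) onto C^q(K,ℂ). Then D_q^up = P ∘ D_q^up ∘ P and D_q^down = P ∘ D_q^down ∘ P. In particular, C^q(K,ℂ) is an invariant subspace of both D_q^up and D_q^down, and both discriminants vanish identically on C^q_+(K,ℂ). -/
open scoped BigOperators

/-- The set of oriented `q`-simplices of a simplicial complex, together with the
orientation-reversal involution `bar` (writing `τ̄` for `bar τ`). -/
structure OrientedSet where
  K : Type
  bar : K → K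
  bar_invol : ∀ τ, bar (bar τ) = τ
  bar_ne : ∀ τ, bar τ ≠ τ

/-- The data of an up graph (`mult = 2(q+1)`) or a down graph (`mult = 2`) on the set of
oriented `q`-simplices: the sign function `η` (extended by `0` off the edge set, so that
`(τ₁, τ₂)` is an edge iff `eta τ₁ τ₂ ≠ 0`), the degree function (`deg_X`, resp. `deg_Y`),
and local finiteness; the degree of a vertex `τ` in the graph is `mult * deg τ`. -/
structure GroverStructure (O : OrientedSet) where
  eta : O.K → O.K → ℝ
  eta_symm : ∀ τ₁ τ₂, eta τ₁ τ₂ = eta τ₂ τ₁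
  eta_vals : ∀ τ₁ τ₂, eta τ₁ τ₂ = 0 ∨ eta τ₁ τ₂ = 1 ∨ eta τ₁ τ₂ = -1
  eta_bar_left : ∀ τ₁ τ₂, eta (O.bar τ₁) τ₂ = - eta τ₁ τ₂
  eta_self : ∀ τ, eta τ τ = 0
  eta_bar_self : ∀ τ, eta τ (O.bar τ) = 0
  deg : O.K → ℕ
  deg_pos : ∀ τ, 0 < deg τ
  deg_bar : ∀ τ, deg (O.bar τ) = deg τ
  mult : ℕ
  nbhdFinite : ∀ τ, {τ' | eta τ τ' ≠ 0}.Finite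
  nbhd_card : ∀ τ, (nbhdFinite τ).toFinset.card = mult * deg τ

namespace GroverStructure

variable {O : OrientedSet} (Y : GroverStructure O)

/-- `(τ₁, τ₂)` is an oriented edge of the up/down graph. -/
def Edge (τ₁ τ₂ : O.K) : Prop := Y.eta τ₁ τ₂ ≠ 0

/-- The normalization constant `(mult * deg τ)^(-1/2)`. -/
noncomputable def c (τ : O.K) : ℂ := ((Real.sqrt (Y.mult * Y.deg τ) : ℝ) : ℂ)⁻¹

/-- The operator `d : ℓ²(E) → ℓ²(K)`; elements of `ℓ²(E)` are represented as
functions on `K × K` (supported on the set of edges). -/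
noncomputable def d (g : O.K × O.K → ℂ) : O.K → ℂ :=
  fun τ => Y.c τ * ∑ᶠ τ' ∈ {τ' | Y.eta τ τ' ≠ 0}, g (τ, τ')

/-- The adjoint `d* : ℓ²(K) → ℓ²(E)`. -/
noncomputable def dstar (f : O.K → ℂ) : O.K × O.K → ℂ :=
  fun p => if Y.eta p.1 p.2 ≠ 0 then Y.c p.1 * f p.1 else 0

/-- The shift operator `(S g)(τ₁,τ₂) = η(τ₁,τ₂) • g(τ₂,τ₁)`. -/
noncomputable def shift (g : O.K × O.K → ℂ) : O.K × O.K → ℂ :=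
  fun p => (Y.eta p.1 p.2 : ℂ) * g (p.2, p.1)

/-- The discriminant operator `D = d ∘ S ∘ d*`. -/
noncomputable def disc (f : O.K → ℂ) : O.K → ℂ := Y.d (Y.shift (Y.dstar f))

/-- The Grover walk `U = S (2 d* d − I)`. -/
noncomputable def walk (g : O.K × O.K → ℂ) : O.K × O.K → ℂ :=
  Y.shift (fun p => 2 * Y.dstar (Y.d g) p - g p)

/-- Membership in `ℓ²(E)`: square summable and supported on the edge set. -/
def MemEdge (g : O.K × O.K → ℂ) : Prop :=
  Memℓp g 2 ∧ ∀ p : O.K × O.K, ¬ Y.Edge p.1 p.2 → g p = 0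

end GroverStructure

/-- The orthogonal projection of `ℓ²(K_q)` onto the cochain space
`C^q(K,ℂ) = {f : f(τ̄) = -f(τ)}`. -/
noncomputable def projC (O : OrientedSet) (f : O.K → ℂ) : O.K → ℂ :=
  fun τ => (f τ - f (O.bar τ)) / 2

/-! Orientation reversal `τ ↦ τ̄` preserves neighbourhoods and degrees and flips the sign of `η`,
so reindexing the sum defining `D f (τ)` by `τ' ↦ τ̄'` gives `D (f ∘ bar) = -D f`. Hence `D`
kills every even `f`, only sees the odd part `P f`, and `D f` is itself odd. -/

lemma projC_eq_smul_sub (O : OrientedSet) (f : O.K → ℂ) :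
    projC O f = (2⁻¹ : ℂ) • (f - f ∘ O.bar) := by
  funext τ
  simp only [projC, Pi.smul_apply, Pi.sub_apply, Function.comp_apply, smul_eq_mul]
  ring

lemma projC_eq_self_of_odd (O : OrientedSet) {f : O.K → ℂ} (hf : ∀ τ, f (O.bar τ) = -f τ) :
    projC O f = f := by
  funext τ
  simp only [projC, hf]
  ring

namespace GroverStructure

variable {O : OrientedSet} (Y : GroverStructure O)

lemma eta_bar_right (τ τ' : O.K) : Y.eta τ (O.bar τ') = -Y.eta τ τ' := by
  rw [Y.eta_symm, Y.eta_bar_left, Y.eta_symm]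

lemma c_bar (τ : O.K) : Y.c (O.bar τ) = Y.c τ := by
  rw [c, Y.deg_bar, c]

lemma nbhdFinite_toFinset_bar (τ : O.K) :
    (Y.nbhdFinite (O.bar τ)).toFinset = (Y.nbhdFinite τ).toFinset := by
  ext τ'
  simp [Y.eta_bar_left]

lemma disc_apply (f : O.K → ℂ) (τ : O.K) :
    Y.disc f τ = Y.c τ * ∑ τ' ∈ (Y.nbhdFinite τ).toFinset, (Y.eta τ τ' : ℂ) * (Y.c τ' * f τ') := by
  rw [disc, d, finsum_mem_eq_finite_toFinset_sum _ (Y.nbhdFinite τ)]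
  congr 1
  refine Finset.sum_congr rfl fun τ' hτ' => ?_
  have hedge : Y.eta τ' τ ≠ 0 := by
    rw [Y.eta_symm]
    simpa using hτ'
  simp [shift, dstar, hedge]

lemma disc_sub (f g : O.K → ℂ) : Y.disc (f - g) = Y.disc f - Y.disc g := by
  funext τ
  simp only [disc_apply, Pi.sub_apply, mul_sub, Finset.sum_sub_distrib]

lemma disc_smul (a : ℂ) (f : O.K → ℂ) : Y.disc (a • f) = a • Y.disc f := by
  funext τ
  simp only [disc_apply, Pi.smul_apply, smul_eq_mul, Finset.mul_sum]
  exact Finset.sum_congr rfl fun _ _ => by ring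

lemma disc_apply_bar (f : O.K → ℂ) (τ : O.K) : Y.disc f (O.bar τ) = -Y.disc f τ := by
  rw [disc_apply, disc_apply, nbhdFinite_toFinset_bar, c_bar]
  simp only [eta_bar_left, Complex.ofReal_neg, neg_mul, Finset.sum_neg_distrib, mul_neg]

lemma disc_comp_bar (f : O.K → ℂ) : Y.disc (f ∘ O.bar) = -Y.disc f := by
  funext τ
  have hmem (τ' : O.K) (h : τ' ∈ (Y.nbhdFinite τ).toFinset) :
      O.bar τ' ∈ (Y.nbhdFinite τ).toFinset := by
    simpa [eta_bar_right] using h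
  simp only [disc_apply, Pi.neg_apply, ← mul_neg, ← Finset.sum_neg_distrib]
  congr 1
  refine Finset.sum_nbij' O.bar O.bar hmem hmem (fun τ' _ => O.bar_invol τ')
    (fun τ' _ => O.bar_invol τ') fun τ' _ => ?_
  simp [eta_bar_right, c_bar]

lemma disc_eq_zero_of_even {f : O.K → ℂ} (hf : ∀ τ, f (O.bar τ) = f τ) : Y.disc f = 0 := by
  have hfix : f ∘ O.bar = f := funext hf
  have hanti := Y.disc_comp_bar f
  rw [hfix] at hanti
  exact self_eq_neg.mp hanti

lemma disc_projC (f : O.K → ℂ) : Y.disc (projC O f) = Y.disc f := by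
  rw [projC_eq_smul_sub, disc_smul, disc_sub, disc_comp_bar, sub_neg_eq_add, ← two_smul ℂ,
    smul_smul, inv_mul_cancel₀ two_ne_zero, one_smul]

lemma disc_eq_projC_disc_projC (f : O.K → ℂ) : Y.disc f = projC O (Y.disc (projC O f)) := by
  rw [disc_projC, projC_eq_self_of_odd O (Y.disc_apply_bar f)]

end GroverStructure

theorem up_down_disc_eq_proj_comp_proj_general (O : OrientedSet)
    (X : GroverStructure O)
    (Y : GroverStructure O) :
    (∀ f : O.K → ℂ, Memℓp f 2 → X.disc f = projC O (X.disc (projC O f))) ∧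
    (∀ f : O.K → ℂ, Memℓp f 2 → Y.disc f = projC O (Y.disc (projC O f))) ∧
    (∀ f : O.K → ℂ, Memℓp f 2 → (∀ τ, f (O.bar τ) = - f τ) →
      (∀ τ, (X.disc f) (O.bar τ) = - (X.disc f) τ) ∧
      (∀ τ, (Y.disc f) (O.bar τ) = - (Y.disc f) τ)) ∧
    (∀ f : O.K → ℂ, Memℓp f 2 → (∀ τ, f (O.bar τ) = f τ) →
      X.disc f = 0 ∧ Y.disc f = 0) :=
  ⟨fun f _ => X.disc_eq_projC_disc_projC f, fun f _ => Y.disc_eq_projC_disc_projC f,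
    fun f _ _ => ⟨X.disc_apply_bar f, Y.disc_apply_bar f⟩,
    fun _ _ hf => ⟨X.disc_eq_zero_of_even hf, Y.disc_eq_zero_of_even hf⟩⟩

/-- Let `P` be the orthogonal projection of `ℓ²(K_q)` onto `C^q(K,ℂ)`.
Then `D_q^up = P D_q^up P` and `D_q^down = P D_q^down P`; in particular `C^q(K,ℂ)` is an
invariant subspace of both discriminants, and both vanish identically on `C^q_+(K,ℂ)`. -/
theorem up_down_disc_eq_proj_comp_proj (O : OrientedSet) (q : ℕ)
    (X : GroverStructure O) (hXup : X.mult = 2 * (q + 1))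
    (Y : GroverStructure O) (hYdown : Y.mult = 2) :
    (∀ f : O.K → ℂ, Memℓp f 2 → X.disc f = projC O (X.disc (projC O f))) ∧
    (∀ f : O.K → ℂ, Memℓp f 2 → Y.disc f = projC O (Y.disc (projC O f))) ∧
    (∀ f : O.K → ℂ, Memℓp f 2 → (∀ τ, f (O.bar τ) = - f τ) →
      (∀ τ, (X.disc f) (O.bar τ) = - (X.disc f) τ) ∧
      (∀ τ, (Y.disc f) (O.bar τ) = - (Y.disc f) τ)) ∧
    (∀ f : O.K → ℂ, Memℓp f 2 → (∀ τ, f (O.bar τ) = f τ) →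
      X.disc f = 0 ∧ Y.disc f = 0) :=
  up_down_disc_eq_proj_comp_proj_general O X Y
end

section
/- Let H and K be complex Hilbert spaces, d: K → H a bounded linear operator with d ∘ d* = I_H, and S a unitary operator on K with S² = I. Set D = d ∘ S ∘ d*: H → H. Then for every g ∈ H: D g = g if and only if S(d* g) = d* g, and D g = −g if and only if S(d* g) = −d* g. -/
open ContinuousLinearMap

/-! If `d d† = 1`, then `d†` is an isometry, so `x := S (d† g)` and `y := d† g` satisfy
`‖x‖ ≤ ‖y‖` for a contraction `S`, while `re ⟪x, y⟫ = re ⟪D g, g⟫`. Hence `D g = g` forces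
`re ⟪x, y⟫ = ‖y‖²`, which on the ball of radius `‖y‖` happens only at `x = y`.
The eigenvalue `-1` is the eigenvalue `1` of the discriminant of `-S`. -/

section

variable {𝕜 H K : Type*} [RCLike 𝕜]
  [NormedAddCommGroup H] [InnerProductSpace 𝕜 H] [CompleteSpace H]
  [NormedAddCommGroup K] [InnerProductSpace 𝕜 K] [CompleteSpace K]
  {d : K →L[𝕜] H}

theorem norm_adjoint_apply_of_comp_adjoint_eq_id
    (hd : d ∘L adjoint d = ContinuousLinearMap.id 𝕜 H) (g : H) :
    ‖adjoint d g‖ = ‖g‖ :=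
  (norm_map_iff_adjoint_comp_self (adjoint d)).2 (by rwa [adjoint_adjoint, one_def]) g

theorem comp_comp_adjoint_apply_eq_self_iff {S : K →L[𝕜] K}
    (hd : d ∘L adjoint d = ContinuousLinearMap.id 𝕜 H)
    (hS : ∀ x, ‖S x‖ ≤ ‖x‖) (g : H) :
    (d ∘L S ∘L adjoint d) g = g ↔ S (adjoint d g) = adjoint d g := by
  constructor
  · intro hDg
    rw [comp_apply, comp_apply] at hDg
    refine eq_of_norm_le_re_inner_eq_norm_sq (𝕜 := 𝕜) (hS _) ?_
    rw [adjoint_inner_right, hDg, norm_adjoint_apply_of_comp_adjoint_eq_id hd,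
      ← inner_self_eq_norm_sq (𝕜 := 𝕜)]
  · intro hfix
    simp only [comp_apply, hfix]
    exact congr($hd g)

end

theorem disc_eigenvalue_pm_one_iff_shift_fixes_general
    {H K : Type*} [NormedAddCommGroup H] [InnerProductSpace ℂ H] [CompleteSpace H]
    [NormedAddCommGroup K] [InnerProductSpace ℂ K] [CompleteSpace K]
    (d : K →L[ℂ] H) (S : K →L[ℂ] K)
    (hd : d.comp (ContinuousLinearMap.adjoint d) = ContinuousLinearMap.id ℂ H)
    (hS_iso : ∀ x : K, ‖S x‖ = ‖x‖) :
    ∀ g : H,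
      ((d.comp (S.comp (ContinuousLinearMap.adjoint d))) g = g ↔
        S ((ContinuousLinearMap.adjoint d) g) = (ContinuousLinearMap.adjoint d) g) ∧
      ((d.comp (S.comp (ContinuousLinearMap.adjoint d))) g = -g ↔
        S ((ContinuousLinearMap.adjoint d) g) = -((ContinuousLinearMap.adjoint d) g)) := by
  intro g
  have hS : ∀ x, ‖S x‖ ≤ ‖x‖ := fun x => (hS_iso x).le
  have hnegS : ∀ x, ‖(-S) x‖ ≤ ‖x‖ := by simpa using hS
  refine ⟨comp_comp_adjoint_apply_eq_self_iff hd hS g, ?_⟩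
  simpa [neg_eq_iff_eq_neg] using comp_comp_adjoint_apply_eq_self_iff hd hnegS g

/-- Let `H`, `K` be complex Hilbert spaces, `d : K → H` bounded with
`d ∘ d* = I`, and `S` a unitary operator on `K` with `S² = I`. Set `D = d S d*`.
Then `D g = g ↔ S (d* g) = d* g` and `D g = −g ↔ S (d* g) = −d* g` for every `g ∈ H`. -/
theorem disc_eigenvalue_pm_one_iff_shift_fixes
    {H K : Type*} [NormedAddCommGroup H] [InnerProductSpace ℂ H] [CompleteSpace H]
    [NormedAddCommGroup K] [InnerProductSpace ℂ K] [CompleteSpace K]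
    (d : K →L[ℂ] H) (S : K →L[ℂ] K)
    (hd : d.comp (ContinuousLinearMap.adjoint d) = ContinuousLinearMap.id ℂ H)
    (hS_iso : ∀ x : K, ‖S x‖ = ‖x‖) (hS_surj : Function.Surjective S)
    (hS2 : ∀ x : K, S (S x) = x) :
    ∀ g : H,
      ((d.comp (S.comp (ContinuousLinearMap.adjoint d))) g = g ↔
        S ((ContinuousLinearMap.adjoint d) g) = (ContinuousLinearMap.adjoint d) g) ∧
      ((d.comp (S.comp (ContinuousLinearMap.adjoint d))) g = -g ↔
        S ((ContinuousLinearMap.adjoint d) g) = -((ContinuousLinearMap.adjoint d) g)) :=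
  disc_eigenvalue_pm_one_iff_shift_fixes_general d S hd hS_iso
end
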